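/- arXiv:math/9906124 — 6 statements merged into one kernel-verified Lean document; each statement's English description precedes it below -/
import Mathlib

section
/- Let G, A, B be groups and φ₁ : G → A, φ₂ : G → B surjective homomorphisms, φ(x) = (φ₁(x), φ₂(x)). For y ∈ G, the coset y·(ker φ₁ · ker φ₂) lies in the center of the quotient group G/(ker φ₁ · ker φ₂) if and only if (φ₁(y), 1) lies in the normalizer of im φ in A × B. -/
theorem stmt_5 {G A B : Type*} [Group G] [Group A] [Group B]
    (φ₁ : G →* A) (φ₂ : G →* B)
    (h₁ : Function.Surjective φ₁) (h₂ : Function.Surjective φ₂) (y : G) :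
    (QuotientGroup.mk y : G ⧸ (φ₁.ker ⊔ φ₂.ker)) ∈
        Subgroup.center (G ⧸ (φ₁.ker ⊔ φ₂.ker)) ↔
      ((φ₁ y, (1 : B)) : A × B) ∈ Subgroup.normalizer ((φ₁.prod φ₂).range : Set (A × B)) := by
  have hker : ∀ x : G, x ∈ φ₁.ker ⊔ φ₂.ker ↔
      ((φ₁ x, (1 : B)) : A × B) ∈ (φ₁.prod φ₂).range := by
    intro x
    constructor
    · intro hx
      rw [← SetLike.mem_coe, Subgroup.mul_normal] at hx
      obtain ⟨n₁, hn₁, n₂, hn₂, rfl⟩ := hx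
      refine ⟨n₂, ?_⟩
      have e1 : φ₁ n₁ = 1 := hn₁
      have e2 : φ₂ n₂ = 1 := hn₂
      simp [MonoidHom.prod_apply, Prod.ext_iff, map_mul, e1, e2]
    · rintro ⟨z, hz⟩
      rw [MonoidHom.prod_apply, Prod.mk.injEq] at hz
      have hA : x * z⁻¹ ∈ φ₁.ker := by
        rw [MonoidHom.mem_ker, map_mul, map_inv, hz.1]; group
      have hB : z ∈ φ₂.ker := hz.2
      have hx : x = (x * z⁻¹) * z := by group
      rw [hx]
      exact mul_mem (Subgroup.mem_sup_left hA) (Subgroup.mem_sup_right hB)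
  constructor
  · intro hc
    have key : ∀ x : G, y * x * y⁻¹ * x⁻¹ ∈ φ₁.ker ⊔ φ₂.ker := by
      intro x
      rw [← QuotientGroup.eq_one_iff]
      have h := Subgroup.mem_center_iff.mp hc (QuotientGroup.mk x)
      simp only [QuotientGroup.mk_mul, QuotientGroup.mk_inv]
      rw [← h]
      group
    rw [Subgroup.mem_normalizer_iff]
    rintro ⟨a, b⟩
    constructor
    · rintro ⟨x, hx⟩
      rw [MonoidHom.prod_apply, Prod.mk.injEq] at hx
      obtain ⟨rfl, rfl⟩ := hx
      obtain ⟨t, ht⟩ := (hker _).mp (key x)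
      refine ⟨t * x, ?_⟩
      rw [MonoidHom.prod_apply, Prod.mk.injEq] at ht ⊢
      simp only [MonoidHom.prod_apply, map_mul, map_inv, ht.1, ht.2]
      constructor
      · simp [map_mul, map_inv]
      · simp [map_mul, map_inv]
    · rintro ⟨z, hz⟩
      have hz' : φ₁ z = φ₁ y * a * (φ₁ y)⁻¹ ∧ φ₂ z = b := by
        rw [MonoidHom.prod_apply, Prod.mk.injEq] at hz
        simpa using hz
      have hmem : y⁻¹ * z * y * z⁻¹ ∈ φ₁.ker ⊔ φ₂.ker := by
        have h1 := key z
        have h2 : (y * z * y⁻¹ * z⁻¹)⁻¹ ∈ φ₁.ker ⊔ φ₂.ker := inv_mem h1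
        have h3 := Subgroup.Normal.conj_mem inferInstance _ h2 y⁻¹
        have : y⁻¹ * (y * z * y⁻¹ * z⁻¹)⁻¹ * y⁻¹⁻¹ = y⁻¹ * z * y * z⁻¹ := by group
        rwa [this] at h3
      obtain ⟨t, ht⟩ := (hker _).mp hmem
      refine ⟨t * z, ?_⟩
      rw [MonoidHom.prod_apply, Prod.mk.injEq] at ht
      rw [MonoidHom.prod_apply, Prod.mk.injEq]
      constructor
      · rw [map_mul, ht.1, map_mul, map_mul, map_mul, map_inv, map_inv, hz'.1]
        group
      · rw [map_mul, ht.2, hz'.2]; group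
  · intro hn
    rw [Subgroup.mem_center_iff]
    intro g
    obtain ⟨x, rfl⟩ := QuotientGroup.mk_surjective g
    rw [← QuotientGroup.mk_mul, ← QuotientGroup.mk_mul, QuotientGroup.eq]
    rw [hker]
    have hconj : ((φ₁ y, (1 : B)) : A × B) * (φ₁ (y⁻¹ * x⁻¹ * y), φ₂ x⁻¹) *
        ((φ₁ y, (1 : B)) : A × B)⁻¹ ∈ (φ₁.prod φ₂).range := by
      refine ⟨x⁻¹, ?_⟩
      rw [MonoidHom.prod_apply, Prod.mk.injEq]
      constructor
      · simp only [map_mul, map_inv, Prod.fst_mul, Prod.inv_mk, Prod.fst_inv]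
        group
      · simp
    obtain ⟨z, hz⟩ := (Subgroup.mem_normalizer_iff.mp hn _).mpr hconj
    rw [MonoidHom.prod_apply, Prod.mk.injEq] at hz
    refine ⟨z * x, ?_⟩
    rw [MonoidHom.prod_apply, Prod.mk.injEq]
    constructor
    · rw [map_mul, hz.1]
      simp only [map_mul, map_inv]
      group
    · rw [map_mul, hz.2]
      simp
end

section
/- Let G, A, B be groups and φ₁ : G → A, φ₂ : G → B surjective homomorphisms, φ(x) = (φ₁(x), φ₂(x)). Every element of the normalizer of im φ in A × B lies in the same left coset of im φ as some element of the form (φ₁(y), 1) with y ∈ G such that y·(ker φ₁ · ker φ₂) is central in G/(ker φ₁ · ker φ₂). -/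
theorem stmt_6 {G A B : Type*} [Group G] [Group A] [Group B]
    (φ₁ : G →* A) (φ₂ : G →* B)
    (h₁ : Function.Surjective φ₁) (h₂ : Function.Surjective φ₂)
    (g : A × B) (hg : g ∈ Subgroup.normalizer ((φ₁.prod φ₂).range : Set (A × B))) :
    ∃ y : G,
      (QuotientGroup.mk y : G ⧸ (φ₁.ker ⊔ φ₂.ker)) ∈
          Subgroup.center (G ⧸ (φ₁.ker ⊔ φ₂.ker)) ∧
      (QuotientGroup.mk g : (A × B) ⧸ (φ₁.prod φ₂).range) =
        QuotientGroup.mk (φ₁ y, (1 : B)) := by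
  obtain ⟨a, b⟩ := g
  obtain ⟨x, hx⟩ := h₂ b
  obtain ⟨y, hy⟩ := h₁ (a * (φ₁ x)⁻¹)
  have key : ∀ t : G, y * t * y⁻¹ * t⁻¹ ∈ φ₁.ker ⊔ φ₂.ker := by
    intro t
    set z := x⁻¹ * t * x with hz
    have htz : t = x * z * x⁻¹ := by rw [hz]; group
    have hmem : (a, b) * (φ₁.prod φ₂) z * (a, b)⁻¹ ∈ (φ₁.prod φ₂).range :=
      (Subgroup.mem_normalizer_iff.mp hg _).mp ⟨z, rfl⟩
    obtain ⟨w, hw⟩ := hmem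
    have hw1 : φ₁ w = a * φ₁ z * a⁻¹ := congrArg Prod.fst hw
    have hw2 : φ₂ w = b * φ₂ z * b⁻¹ := congrArg Prod.snd hw
    have m1 : y * t * y⁻¹ * w⁻¹ ∈ φ₁.ker := by
      rw [MonoidHom.mem_ker]
      simp only [map_mul, map_inv, hy, hw1, htz]
      group
    have m2 : w * t⁻¹ ∈ φ₂.ker := by
      rw [MonoidHom.mem_ker]
      simp only [map_mul, map_inv, hw2, htz, ← hx]
      group
    have := Subgroup.mul_mem_sup m1 m2
    convert this using 1
    group
  refine ⟨y, ?_, ?_⟩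
  · rw [Subgroup.mem_center_iff]
    intro q
    induction q using QuotientGroup.induction_on with
    | H t =>
      rw [← QuotientGroup.mk_mul, ← QuotientGroup.mk_mul, QuotientGroup.eq]
      have h2 := (Subgroup.sup_normal φ₁.ker φ₂.ker).conj_mem _ (key t⁻¹) y⁻¹
      have h3 := (φ₁.ker ⊔ φ₂.ker).inv_mem h2
      convert h3 using 1
      group
  · rw [QuotientGroup.eq]
    refine ⟨x⁻¹, ?_⟩
    have : (φ₁.prod φ₂) x⁻¹ = ((φ₁ x)⁻¹, (φ₂ x)⁻¹) := by simp
    rw [this, Prod.ext_iff]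
    simp [Prod.fst_mul, Prod.snd_mul, hy, hx, mul_assoc]
end

section
/- Let G, A, B be groups and φ₁ : G → A, φ₂ : G → B surjective homomorphisms, φ(x) = (φ₁(x), φ₂(x)). Then im φ is a normal subgroup of A × B if and only if the quotient group G/(ker φ₁ · ker φ₂) is abelian. -/
/-! Writing `N = ker φ₁ ⊔ ker φ₂`, the pair `(φ₁ x, φ₂ y)` lies in `im φ` exactly when `x` and `y`
have the same image in `G ⧸ N`. Since the `φᵢ` are surjective, every element of `A × B` has this
form, so normality of `im φ` says that `x g x⁻¹ ≡ y g y⁻¹ (mod N)` for all `g x y`; taking `y = 1`,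
this is the commutativity of `G ⧸ N`. -/

open Function

theorem forall_mul_mul_inv_eq_iff_forall_commute {Q : Type*} [Group Q] :
    (∀ g x y : Q, x * g * x⁻¹ = y * g * y⁻¹) ↔ ∀ a b : Q, a * b = b * a := by
  refine ⟨fun h a b => ?_, fun h g x y => ?_⟩
  · simpa [mul_inv_eq_iff_eq_mul] using h b a 1
  · rw [h x g, h y g]
    group

namespace MonoidHom

variable {G A B : Type*} [Group G] [Group A] [Group B]

theorem mk_mem_range_prod_iff (φ₁ : G →* A) (φ₂ : G →* B) (x y : G) :
    (φ₁ x, φ₂ y) ∈ (φ₁.prod φ₂).range ↔ (x : G ⧸ (φ₁.ker ⊔ φ₂.ker)) = y := by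
  rw [QuotientGroup.eq, Subgroup.mem_sup_of_normal_right]
  constructor
  · rintro ⟨g, hg⟩
    simp only [prod_apply, Prod.mk.injEq] at hg
    refine ⟨x⁻¹ * g, ?_, g⁻¹ * y, ?_, by group⟩
    · simp [hg.1]
    · simp [hg.2]
  · rintro ⟨k₁, hk₁, k₂, hk₂, hk⟩
    have hy : y = x * k₁ * k₂ := by rw [mul_assoc, hk]; group
    exact ⟨x * k₁, by simp [mem_ker.1 hk₁, mem_ker.1 hk₂, hy]⟩

theorem range_prod_normal_iff (φ₁ : G →* A) (φ₂ : G →* B) (h₁ : Surjective φ₁)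
    (h₂ : Surjective φ₂) :
    (φ₁.prod φ₂).range.Normal ↔
      ∀ g x y : G, ((x * g * x⁻¹ : G) : G ⧸ (φ₁.ker ⊔ φ₂.ker)) = (y * g * y⁻¹ : G) := by
  refine ⟨fun hN g x y => ?_, fun h => ⟨?_⟩⟩
  · rw [← mk_mem_range_prod_iff]
    simpa using hN.conj_mem _ (mem_range.2 ⟨g, rfl⟩) (φ₁ x, φ₂ y)
  · rintro _ ⟨g, rfl⟩ ⟨a, b⟩
    obtain ⟨x, rfl⟩ := h₁ a
    obtain ⟨y, rfl⟩ := h₂ b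
    simpa using (mk_mem_range_prod_iff φ₁ φ₂ _ _).2 (h g x y)

end MonoidHom

theorem stmt_7 {G A B : Type*} [Group G] [Group A] [Group B]
    (φ₁ : G →* A) (φ₂ : G →* B)
    (h₁ : Function.Surjective φ₁) (h₂ : Function.Surjective φ₂) :
    (φ₁.prod φ₂).range.Normal ↔
      ∀ a b : G ⧸ (φ₁.ker ⊔ φ₂.ker), a * b = b * a := by
  rw [MonoidHom.range_prod_normal_iff φ₁ φ₂ h₁ h₂, ← forall_mul_mul_inv_eq_iff_forall_commute]
  simp only [QuotientGroup.mk_surjective.forall, QuotientGroup.mk_mul, QuotientGroup.mk_inv]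
end

section
/- Let G, A, B be groups and φ₁ : G → A, φ₂ : G → B surjective homomorphisms, φ(x) = (φ₁(x), φ₂(x)). Then the index of im φ in A × B is finite if and only if the index of ker φ₁ · ker φ₂ in G is finite, and in that case the two indices are equal. -/
/-!
Both indices equal the index of `φ₂(ker φ₁)` in `B`. Since `φ₁` is surjective, every left coset
of `im φ` in `A × B` meets `1 × B`, and `im φ ∩ (1 × B) = 1 × φ₂(ker φ₁)`; since `φ₂` is
surjective, `φ₂⁻¹(φ₂(ker φ₁)) = ker φ₁ · ker φ₂` has the same index in `G` as `φ₂(ker φ₁)` in `B`.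
-/

namespace Subgroup

variable {G G' : Type*} [Group G] [Group G']

theorem index_comap_of_surjective_mk {f : G' →* G} {H : Subgroup G}
    (hf : Function.Surjective fun x => (f x : G ⧸ H)) : (H.comap f).index = H.index := by
  have key : ∀ x y : G', (x : G' ⧸ H.comap f) = y ↔ (f x : G ⧸ H) = f y := by
    simp [QuotientGroup.eq]
  refine Nat.card_congr (Equiv.ofBijective (Quotient.map' f fun x y => ?_) ⟨?_, ?_⟩)
  · simp only [QuotientGroup.leftRel_apply, mem_comap, map_mul, map_inv]
    exact id
  · rintro ⟨x⟩ ⟨y⟩ hxy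
    exact (key x y).mpr hxy
  · rintro ⟨g⟩
    obtain ⟨x, hx⟩ := hf g
    exact ⟨x, hx⟩

end Subgroup

namespace MonoidHom

variable {G A B : Type*} [Group G] [Group A] [Group B]

theorem comap_inr_range_prod (φ₁ : G →* A) (φ₂ : G →* B) :
    (φ₁.prod φ₂).range.comap (inr A B) = φ₁.ker.map φ₂ := by
  ext b
  simp [Prod.ext_iff]

theorem index_range_prod (φ₁ : G →* A) (φ₂ : G →* B) (h₁ : Function.Surjective φ₁) :
    (φ₁.prod φ₂).range.index = (φ₁.ker.map φ₂).index := by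
  rw [← comap_inr_range_prod, Subgroup.index_comap_of_surjective_mk]
  rintro ⟨a, b⟩
  obtain ⟨g, rfl⟩ := h₁ a
  refine ⟨b * (φ₂ g)⁻¹, QuotientGroup.eq.mpr ⟨g, ?_⟩⟩
  simp

end MonoidHom

theorem stmt_8 {G A B : Type*} [Group G] [Group A] [Group B]
    (φ₁ : G →* A) (φ₂ : G →* B)
    (h₁ : Function.Surjective φ₁) (h₂ : Function.Surjective φ₂) :
    ((φ₁.prod φ₂).range.index ≠ 0 ↔ (φ₁.ker ⊔ φ₂.ker).index ≠ 0) ∧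
      (φ₁.prod φ₂).range.index = (φ₁.ker ⊔ φ₂.ker).index := by
  have hindex : (φ₁.prod φ₂).range.index = (φ₁.ker ⊔ φ₂.ker).index := by
    rw [MonoidHom.index_range_prod φ₁ φ₂ h₁, ← Subgroup.index_comap_of_surjective _ h₂,
      Subgroup.comap_map_eq]
  exact ⟨by rw [hindex], hindex⟩
end

section
/- Let X be a topological space with basepoint x₀, and let H : X × [0,1] → X be a continuous map with H(x,0) = H(x,1) = x for all x ∈ X. Then the homotopy class of the loop t ↦ H(x₀, t) lies in the center of the fundamental group π₁(X, x₀). -/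
open CategoryTheory FundamentalGroupoid FundamentalGroupoidFunctor

attribute [local instance] Path.Homotopic.setoid

theorem stmt_13 {X : Type} [TopologicalSpace X] (x₀ : X)
    (H : C(X × unitInterval, X))
    (hH0 : ∀ x : X, H (x, 0) = x) (hH1 : ∀ x : X, H (x, 1) = x)
    (m : Path x₀ x₀) (hm : ∀ t : unitInterval, m t = H (x₀, t)) :
    (FundamentalGroup.fromPath (⟦m⟧ : Path.Homotopic.Quotient x₀ x₀) :
        FundamentalGroup (TopCat.of X) x₀) ∈
      Subgroup.center (FundamentalGroup (TopCat.of X) x₀) := by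
  -- Turn `H` into a homotopy from the identity map to itself.
  let f : C((TopCat.of X : TopCat), (TopCat.of X : TopCat)) := ContinuousMap.id X
  let H' : ContinuousMap.Homotopy f f :=
    { toContinuousMap := H.comp ⟨Prod.swap, continuous_swap⟩
      map_zero_left := fun x => hH0 x
      map_one_left := fun x => hH1 x }
  have hev : (⟦H'.evalAt x₀⟧ : Path.Homotopic.Quotient x₀ x₀) = ⟦m⟧ := by
    congr 1
    ext t
    show H (x₀, t) = m t
    exact (hm t).symm
  have key : ∀ p : (fromTop (X := TopCat.of X) x₀ ⟶ fromTop x₀),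
      p ≫ (⟦m⟧ : Path.Homotopic.Quotient x₀ x₀) = (⟦m⟧ : Path.Homotopic.Quotient x₀ x₀) ≫ p := by
    intro p
    have hid : (πₘ (TopCat.ofHom f)).map p = p := by
      refine Quotient.inductionOn p fun p' => ?_
      show (⟦p'.map f.continuous⟧ : Path.Homotopic.Quotient _ _) = ⟦p'⟧
      congr 1
    have h := H'.eq_diag_path p
    rw [hid] at h
    rw [← hev]
    exact h.1.trans h.2.symm
  rw [Subgroup.mem_center_iff]
  intro g
  exact (key g).symm
end

section
/- Let X be a path-connected topological space with trivial center of fundamental group (e.g., a closed hyperbolic 3-manifold), x₀ ∈ X, and H : X × [0,1] → X a continuous map with H(x,0) = H(x,1) = x for all x. Then the loop t ↦ H(x₀, t) is null-homotopic. -/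
open CategoryTheory

attribute [local instance] Path.Homotopic.setoid

theorem stmt_14 {X : Type*} [TopologicalSpace X] [PathConnectedSpace X] (x₀ : X)
    (hZ : Subgroup.center (FundamentalGroup X x₀) = ⊥)
    (H : C(X × unitInterval, X))
    (hH0 : ∀ x : X, H (x, 0) = x) (hH1 : ∀ x : X, H (x, 1) = x)
    (m : Path x₀ x₀) (hm : ∀ t : unitInterval, m t = H (x₀, t)) :
    m.Homotopic (Path.refl x₀) := by
  let H' : ContinuousMap.Homotopy (ContinuousMap.id (TopCat.of X))
      (ContinuousMap.id (TopCat.of X)) :=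
    { toFun := fun p => H (p.2, p.1)
      continuous_toFun := H.continuous.comp (continuous_snd.prodMk continuous_fst)
      map_zero_left := fun x => hH0 x
      map_one_left := fun x => hH1 x }
  have hme : m = H'.evalAt x₀ := by
    ext t
    exact hm t
  -- naturality : every loop commutes with ⟦m⟧ in the fundamental groupoid
  have key : ∀ q : FundamentalGroupoid.mk x₀ ⟶ FundamentalGroupoid.mk x₀,
      q ≫ (⟦m⟧ : Path.Homotopic.Quotient x₀ x₀) = ⟦m⟧ ≫ q := by
    intro q
    have h := (FundamentalGroupoidFunctor.homotopicMapsNatIso H').naturality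
      (X := FundamentalGroupoid.mk x₀) (Y := FundamentalGroupoid.mk x₀) q
    simp only [FundamentalGroupoidFunctor.homotopicMapsNatIso] at h
    have hid : ∀ r : FundamentalGroupoid.mk x₀ ⟶ FundamentalGroupoid.mk x₀,
        (FundamentalGroupoid.map
          (ContinuousMap.id (TopCat.of X))).map r = r := by
      intro r
      induction r using Quotient.inductionOn with
      | h p => simp [FundamentalGroupoid.map_eq, ← Path.Homotopic.Quotient.mk_map, Path.map_id]; rfl
    rw [hid] at h
    rw [hme]
    exact h
  -- hence the class of m is central
  let a : FundamentalGroup X x₀ := FundamentalGroup.fromPath (X := TopCat.of X) ⟦m⟧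
  have ha : a ∈ Subgroup.center (FundamentalGroup X x₀) := by
    rw [Subgroup.mem_center_iff]
    intro g
    have hg := key g
    exact hg.symm
  rw [hZ, Subgroup.mem_bot] at ha
  have hhom : (⟦m⟧ : Path.Homotopic.Quotient x₀ x₀) = 𝟙 (FundamentalGroupoid.mk x₀) :=
    ha
  rw [FundamentalGroupoid.id_eq_path_refl] at hhom
  exact Quotient.exact hhom
end
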